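/- arXiv:1903.12108 — 8 statements merged into one kernel-verified Lean document; each statement's English description precedes it below -/
import Mathlib

section
/- A weakly increasing tuple a = (a_1,…,a_n) of positive integers satisfies a_i ≤ 1 + k(i−1) for all i ∈ [n] if and only if for every i ∈ [n], z_{(i−1)k}(a) ≥ i, where z_p(a) is the size of the p-center of a. -/
/-- `z_p(a)`: the size of the largest subset `{x_1 > x_2 > ⋯ > x_q}` of `[n]`
with `a_{x_j} ≤ p + j` for all `j ∈ [q]` (here indices are 0-indexed via `Fin`,
so the condition reads `a (x j) ≤ p + j + 1`). -/
noncomputable def zlen (n p : ℕ) (a : Fin n → ℕ) : ℕ :=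
  sSup {q : ℕ | ∃ x : Fin q → Fin n, StrictAnti x ∧ ∀ j : Fin q, a (x j) ≤ p + (j : ℕ) + 1}

lemma zlen_bdd (n p : ℕ) (a : Fin n → ℕ) :
    BddAbove {q : ℕ | ∃ x : Fin q → Fin n, StrictAnti x ∧ ∀ j : Fin q, a (x j) ≤ p + (j : ℕ) + 1} := by
  refine ⟨n, fun q hq => ?_⟩
  obtain ⟨x, hx, -⟩ := hq
  simpa using Fintype.card_le_of_injective x hx.injective

lemma aux_anti {q n : ℕ} (x : Fin q → Fin n) (hx : StrictAnti x) :
    ∀ j : ℕ, (hj : j < q) → j + (x ⟨j, hj⟩ : ℕ) ≤ (x ⟨0, by omega⟩ : ℕ) := by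
  intro j
  induction j with
  | zero => intro hj; simp
  | succ m ih =>
    intro hj
    have h1 := hx (show (⟨m, by omega⟩ : Fin q) < ⟨m + 1, hj⟩ by simp [Fin.lt_def])
    have h2 := ih (by omega)
    rw [Fin.lt_def] at h1
    omega

theorem stmt3 {n : ℕ} (k : ℕ) (a : Fin n → ℕ) (ha : ∀ i, 0 < a i) (hmono : Monotone a) :
    (∀ i : Fin n, a i ≤ 1 + k * (i : ℕ)) ↔
      (∀ i : Fin n, (i : ℕ) + 1 ≤ zlen n ((i : ℕ) * k) a) := by
  constructor
  · intro h i
    apply le_csSup (zlen_bdd n ((i : ℕ) * k) a)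
    refine ⟨fun j => ⟨(i : ℕ) - (j : ℕ), by omega⟩, ?_, ?_⟩
    · intro j j' hjj'
      rw [Fin.lt_def] at hjj' ⊢
      have := j'.isLt
      simp only
      omega
    · intro j
      calc a ⟨(i : ℕ) - (j : ℕ), by omega⟩ ≤ 1 + k * ((i : ℕ) - (j : ℕ)) := h _
        _ ≤ 1 + k * (i : ℕ) := by gcongr; omega
        _ = 1 + (i : ℕ) * k := by ring
        _ ≤ (i : ℕ) * k + (j : ℕ) + 1 := by omega
  · intro h i
    set q := zlen n ((i : ℕ) * k) a with hq
    have hmem : q ∈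
        {q : ℕ | ∃ x : Fin q → Fin n, StrictAnti x ∧ ∀ j : Fin q, a (x j) ≤ (i : ℕ) * k + (j : ℕ) + 1} :=
      Nat.sSup_mem ⟨0, Fin.elim0, fun j => j.elim0, fun j => j.elim0⟩ (zlen_bdd n _ a)
    obtain ⟨x, hx, hcond⟩ := hmem
    have hle : (i : ℕ) + 1 ≤ q := h i
    have h0 : (0 : ℕ) < q := by omega
    have hiq : (i : ℕ) < q := by omega
    have key := aux_anti x hx (i : ℕ) hiq
    have hcond0 := hcond ⟨0, h0⟩
    have hai : a i ≤ a (x ⟨0, h0⟩) := by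
      apply hmono
      rw [Fin.le_def]
      omega
    calc a i ≤ (i : ℕ) * k + (0 : ℕ) + 1 := by simpa using hai.trans hcond0
      _ = 1 + k * (i : ℕ) := by ring
end

section
/- For a weakly increasing tuple a = (a_1,…,a_n) of positive integers, z_p(a) = |{j ∈ [n] : a_j ≤ p + 1}| for every integer p ≥ 0. -/
theorem stmt4 {n : ℕ} (a : Fin n → ℕ) (ha : ∀ i, 0 < a i) (hmono : Monotone a) (p : ℕ) :
    zlen n p a = (Finset.univ.filter (fun j : Fin n => a j ≤ p + 1)).card := by
  classical
  set F := Finset.univ.filter (fun j : Fin n => a j ≤ p + 1) with hF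
  set k := F.card with hk
  have hkn : k ≤ n := by
    calc k ≤ (Finset.univ : Finset (Fin n)).card := Finset.card_filter_le _ _
    _ = n := by simp
  -- the filter set is an initial segment
  have hmem : ∀ i : Fin n, (i : ℕ) < k → a i ≤ p + 1 := by
    intro i hi
    by_contra h
    push_neg at h
    have hsub : F ⊆ Finset.Iio i := by
      intro j hj
      simp only [hF, Finset.mem_filter] at hj
      rw [Finset.mem_Iio]
      by_contra hj2
      push_neg at hj2
      exact absurd (hmono hj2) (by omega)
    have := Finset.card_le_card hsub
    rw [Fin.card_Iio] at this
    omega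
  have hbdd : BddAbove {q : ℕ | ∃ x : Fin q → Fin n, StrictAnti x ∧
      ∀ j : Fin q, a (x j) ≤ p + (j : ℕ) + 1} := by
    refine ⟨n, fun q hq => ?_⟩
    obtain ⟨x, hx, -⟩ := hq
    simpa using Fintype.card_le_of_injective x hx.injective
  apply le_antisymm
  · -- sSup ≤ k
    have hne : (0:ℕ) ∈ {q : ℕ | ∃ x : Fin q → Fin n, StrictAnti x ∧
        ∀ j : Fin q, a (x j) ≤ p + (j : ℕ) + 1} :=
      ⟨Fin.elim0, fun i => i.elim0, fun j => j.elim0⟩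
    apply csSup_le ⟨0, hne⟩
    rintro q ⟨x, hx, hxa⟩
    rcases Nat.eq_zero_or_pos q with rfl | hq
    · exact Nat.zero_le _
    · have h0 : a (x (⟨0, hq⟩ : Fin q)) ≤ p + 1 := by simpa using hxa ⟨0, hq⟩
      have hall : ∀ j : Fin q, a (x j) ≤ p + 1 := by
        intro j
        rcases Nat.eq_zero_or_pos (j : ℕ) with hj0 | hj0
        · have : j = (⟨0, hq⟩ : Fin q) := by ext; exact hj0
          rw [this]; exact h0
        · have : x j ≤ x (⟨0, hq⟩ : Fin q) := (hx.antitone) (by simp [Fin.le_def])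
          exact le_trans (hmono this) h0
      have hinj : Function.Injective (fun j : Fin q => (⟨x j, by
          simp only [hF, Finset.mem_filter]; exact ⟨Finset.mem_univ _, hall j⟩⟩ : F)) := by
        intro i j hij
        exact hx.injective (by simpa using congrArg Subtype.val hij)
      have := Fintype.card_le_of_injective _ hinj
      simpa [Fintype.card_coe] using this
  · -- k ≤ sSup
    apply le_csSup hbdd
    refine ⟨fun j => ⟨k - 1 - (j : ℕ), by omega⟩, ?_, ?_⟩
    · intro i j hij
      have hi : (i : ℕ) < k := i.2
      have hj : (j : ℕ) < k := j.2
      have : (i : ℕ) < (j : ℕ) := hij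
      simp only [Fin.lt_def]
      omega
    · intro j
      have hj : (j : ℕ) < k := j.2
      have := hmem ⟨k - 1 - (j : ℕ), by omega⟩ (by simp; omega)
      calc a _ ≤ p + 1 := this
      _ ≤ p + (j : ℕ) + 1 := by omega
end

section
/- Let z = (z_0, z_1, …, z_p) be a weakly increasing sequence of nonnegative integers with p ≥ n and z_p = n. Then the number of tuples a ∈ ℕⁿ with center sequence (z_0(a), …, z_p(a)) equal to z is exactly n!. -/
-- `zlen n p a` is by definition `sSup (chainLengths n p a)`.
def chainLengths (n p : ℕ) (a : Fin n → ℕ) : Set ℕ :=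
  {q | ∃ x : Fin q → Fin n, StrictAnti x ∧ ∀ j : Fin q, a (x j) ≤ p + (j : ℕ) + 1}

section Chains

variable {n p q : ℕ} {a : Fin n → ℕ}

theorem zero_mem_chainLengths : 0 ∈ chainLengths n p a :=
  ⟨Fin.elim0, fun i => i.elim0, fun j => j.elim0⟩

theorem le_of_mem_chainLengths (h : q ∈ chainLengths n p a) : q ≤ n := by
  obtain ⟨x, hx, -⟩ := h
  simpa using Fintype.card_le_of_injective x hx.injective

theorem bddAbove_chainLengths : BddAbove (chainLengths n p a) :=
  ⟨n, fun _ => le_of_mem_chainLengths⟩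

theorem zlen_mem_chainLengths : zlen n p a ∈ chainLengths n p a :=
  Nat.sSup_mem ⟨0, zero_mem_chainLengths⟩ bddAbove_chainLengths

theorem le_zlen (h : q ∈ chainLengths n p a) : q ≤ zlen n p a :=
  le_csSup bddAbove_chainLengths h

theorem zlen_le_iff {m : ℕ} : zlen n p a ≤ m ↔ ∀ q ∈ chainLengths n p a, q ≤ m :=
  csSup_le_iff bddAbove_chainLengths ⟨0, zero_mem_chainLengths⟩

theorem zlen_le : zlen n p a ≤ n :=
  le_of_mem_chainLengths zlen_mem_chainLengths

theorem chainLengths_mono {p' : ℕ} (hp : p ≤ p') : chainLengths n p a ⊆ chainLengths n p' a :=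
  fun _ ⟨x, hx, hxa⟩ => ⟨x, hx, fun j => (hxa j).trans (by omega)⟩

theorem zlen_mono (a : Fin n → ℕ) : Monotone (zlen n · a) := fun _ _ hp =>
  zlen_le_iff.2 fun _ hq => le_zlen (chainLengths_mono hp hq)

variable {c : ℕ}

theorem mem_chainLengths_snoc (h : q ∈ chainLengths n p a) :
    q ∈ chainLengths (n + 1) p (Fin.snoc a c) := by
  obtain ⟨x, hx, hxa⟩ := h
  exact ⟨fun j => (x j).castSucc, Fin.strictMono_castSucc.comp_strictAnti hx,
    by simpa using hxa⟩

theorem add_one_mem_chainLengths_snoc (hc : c ≤ p + 1) (h : q ∈ chainLengths n (p + 1) a) :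
    q + 1 ∈ chainLengths (n + 1) p (Fin.snoc a c) := by
  obtain ⟨x, hx, hxa⟩ := h
  refine ⟨Fin.cons (Fin.last n) fun j => (x j).castSucc, ?_, ?_⟩
  · exact (Fin.strictMono_cons (α := (Fin (n + 1))ᵒᵈ)).2
      ⟨fun j => Fin.castSucc_lt_last (x j), Fin.strictMono_castSucc.comp_strictAnti hx⟩
  · refine Fin.cases (by simpa using hc) fun j => ?_
    have := hxa j
    simp only [Fin.cons_succ, Fin.snoc_castSucc, Fin.val_succ]
    omega

theorem mem_chainLengths_of_mem_chainLengths_snoc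
    (h : q ∈ chainLengths (n + 1) p (Fin.snoc a c)) :
    q ∈ chainLengths n p a ∨ c ≤ p + 1 ∧ q - 1 ∈ chainLengths n (p + 1) a := by
  obtain ⟨x, hx, hxa⟩ := h
  by_cases hlast : ∃ k, x k = Fin.last n
  · obtain ⟨k, hk⟩ := hlast
    obtain ⟨r, rfl⟩ : ∃ r, q = r + 1 := Nat.exists_eq_succ_of_ne_zero k.pos.ne'
    have hx0 : x 0 = Fin.last n := le_antisymm (Fin.le_last _) (hk ▸ hx.antitone k.zero_le)
    have htail (j : Fin r) : x j.succ ≠ Fin.last n := hx0 ▸ (hx j.succ_pos).ne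
    right
    refine ⟨by simpa [hx0] using hxa 0, fun j => (x j.succ).castPred (htail j), fun i j hij => ?_,
      fun j => ?_⟩
    · exact Fin.castPred_lt_castPred_iff.2 (hx (Fin.succ_lt_succ_iff.2 hij))
    · have := hxa j.succ
      rw [← Fin.castSucc_castPred (x j.succ) (htail j), Fin.snoc_castSucc, Fin.val_succ] at this
      dsimp only
      omega
  · have hne (j : Fin q) : x j ≠ Fin.last n := fun hj => hlast ⟨j, hj⟩
    left
    refine ⟨fun j => (x j).castPred (hne j), fun i j hij => ?_, fun j => ?_⟩
    · exact Fin.castPred_lt_castPred_iff.2 (hx hij)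
    · have := hxa j
      rwa [← Fin.castSucc_castPred (x j) (hne j), Fin.snoc_castSucc] at this

theorem zlen_snoc : zlen (n + 1) p (Fin.snoc a c) =
    if c ≤ p + 1 then zlen n (p + 1) a + 1 else zlen n p a := by
  refine le_antisymm (zlen_le_iff.2 fun q hq => ?_) ?_
  · rcases mem_chainLengths_of_mem_chainLengths_snoc hq with hq | ⟨hc, hq⟩
    · have := zlen_mono a p.le_succ
      split_ifs <;> linarith [le_zlen hq]
    · rw [if_pos hc]
      have := le_zlen hq
      omega
  · split_ifs with hc
    · exact le_zlen (add_one_mem_chainLengths_snoc hc zlen_mem_chainLengths)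
    · exact le_zlen (mem_chainLengths_snoc zlen_mem_chainLengths)

end Chains

def centerFiber (n p : ℕ) (z : ℕ → ℕ) : Set (Fin n → ℕ) :=
  {a | (∀ i, 0 < a i) ∧ ∀ j ≤ p, zlen n j a = z j}

def zPrev (z : ℕ → ℕ) : ℕ → ℕ
  | 0 => 0
  | t + 1 => z t

-- If `Fin.snoc a (t + 1)` has center sequence `z`, then `a` has center sequence `initSeq z t v`
-- with `v = zlen n t a` (`snoc_mem_centerFiber_iff`).
def initSeq (z : ℕ → ℕ) (t v : ℕ) (j : ℕ) : ℕ :=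
  if j < t then z j else if j = t then v else z (j - 1) - 1

def stepPairs (z : ℕ → ℕ) (p : ℕ) : Finset (Σ _ : ℕ, ℕ) :=
  (Finset.range (p + 1)).sigma fun t => Finset.Ico (zPrev z t) (z t)

def snocFiber (n p : ℕ) (z : ℕ → ℕ) (tv : Σ _ : ℕ, ℕ) : Set (Fin (n + 1) → ℕ) :=
  (Fin.snoc (α := fun _ => ℕ) · (tv.1 + 1)) '' centerFiber n (p + 1) (initSeq z tv.1 tv.2)

open scoped Nat

section Counting

variable {n p t v : ℕ} {z : ℕ → ℕ}

theorem zPrev_monotone (hz : Monotone z) : Monotone (zPrev z) :=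
  monotone_nat_of_le_succ fun
    | 0 => Nat.zero_le _
    | t + 1 => hz t.le_succ

theorem card_stepPairs (hz : Monotone z) (p : ℕ) : (stepPairs z p).card = z p := by
  simp only [stepPairs, Finset.card_sigma, Nat.card_Ico]
  exact Finset.sum_range_tsub (zPrev_monotone hz) (p + 1)

theorem mem_stepPairs :
    ⟨t, v⟩ ∈ stepPairs z p ↔ t ≤ p ∧ zPrev z t ≤ v ∧ v < z t := by
  simp [stepPairs]

theorem initSeq_monotone (hz : Monotone z) (hprev : zPrev z t ≤ v) (hv : v < z t) :
    Monotone (initSeq z t v) := by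
  refine monotone_nat_of_le_succ fun j => ?_
  rcases lt_trichotomy (j + 1) t with h | h | h
  · simp only [initSeq, if_pos h, if_pos (j.lt_succ_self.trans h)]
    exact hz j.le_succ
  · subst h
    simpa [initSeq, zPrev] using hprev
  · have := hz (Nat.sub_le j 1)
    have := hz (show t ≤ j by omega)
    simp only [initSeq, Nat.add_sub_cancel]
    split_ifs <;> omega

theorem zlen_snoc_add_one (a : Fin n → ℕ) (t j : ℕ) :
    zlen (n + 1) j (Fin.snoc a (t + 1)) = if t ≤ j then zlen n (j + 1) a + 1 else zlen n j a := by
  simp [zlen_snoc]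

theorem snoc_mem_centerFiber_iff (hz : Monotone z) (ht : t ≤ p) (hv : v < z t)
    {a : Fin n → ℕ} :
    Fin.snoc a (t + 1) ∈ centerFiber (n + 1) p z ∧ zlen n t a = v ↔
      a ∈ centerFiber n (p + 1) (initSeq z t v) := by
  simp only [centerFiber, Set.mem_ofPred_eq, Fin.forall_fin_succ' (P := fun i => 0 < _),
    Fin.snoc_castSucc, Fin.snoc_last, zlen_snoc_add_one, and_assoc]
  refine and_congr_right fun _ =>
    ⟨fun ⟨_, h, hvt⟩ j hj => ?_, fun h => ⟨t.succ_pos, fun j hj => ?_, ?_⟩⟩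
  · rcases lt_trichotomy j t with hjt | rfl | hjt
    · simpa [initSeq, hjt, hjt.not_ge] using h j (by omega)
    · simpa [initSeq] using hvt
    · have := h (j - 1) (by omega)
      simp only [initSeq, hjt.not_gt, hjt.ne', if_false, if_pos (Nat.le_sub_one_of_lt hjt),
        Nat.sub_add_cancel (t.zero_le.trans_lt hjt)] at this ⊢
      omega
  · split_ifs with htj
    · have hj1 := h (j + 1) (by omega)
      have := hz htj
      simp only [initSeq, if_neg (show ¬ j + 1 < t by omega), if_neg (show j + 1 ≠ t by omega),
        Nat.add_sub_cancel] at hj1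
      omega
    · simpa [initSeq, show j < t by omega] using h j (by omega)
  · rw [h t (by omega)]
    simp [initSeq]

theorem mem_stepPairs_of_snoc_mem_centerFiber (hzp : z p = n + 1)
    {a : Fin n → ℕ} (ha : Fin.snoc a (t + 1) ∈ centerFiber (n + 1) p z) :
    ⟨t, zlen n t a⟩ ∈ stepPairs z p := by
  have h (j : ℕ) (hj : j ≤ p) := zlen_snoc_add_one a t j ▸ ha.2 j hj
  have ht : t ≤ p := by
    by_contra! htp
    have := h p le_rfl
    rw [if_neg htp.not_ge] at this
    linarith [zlen_le (n := n) (p := p) (a := a)]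
  refine mem_stepPairs.2 ⟨ht, ?_, ?_⟩
  · cases t with
    | zero => exact Nat.zero_le _
    | succ s =>
      have := h s (by omega)
      rw [if_neg (by omega)] at this
      exact this.symm.trans_le (zlen_mono a s.le_succ)
  · have := h t ht
    rw [if_pos le_rfl] at this
    have : zlen n t a ≤ zlen n (t + 1) a := zlen_mono a t.le_succ
    omega

theorem centerFiber_add_one (hz : Monotone z) (hzp : z p = n + 1) :
    centerFiber (n + 1) p z =
      ⋃ tv ∈ (stepPairs z p : Set (Σ _ : ℕ, ℕ)), snocFiber n p z tv := by
  ext a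
  simp only [snocFiber, Set.mem_iUnion, Set.mem_image, Finset.mem_coe]
  constructor
  · intro ha
    obtain ⟨a, c, rfl⟩ : ∃ a' c, a = Fin.snoc a' c :=
      ⟨Fin.init a, a (Fin.last n), (Fin.snoc_init_self a).symm⟩
    obtain ⟨t, rfl⟩ : ∃ t, c = t + 1 :=
      Nat.exists_eq_add_one.2 (by simpa using ha.1 (Fin.last n))
    have htv := mem_stepPairs_of_snoc_mem_centerFiber hzp ha
    obtain ⟨ht, -, hv⟩ := mem_stepPairs.1 htv
    exact ⟨_, htv, a, (snoc_mem_centerFiber_iff hz ht hv).1 ⟨ha, rfl⟩, rfl⟩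
  · rintro ⟨⟨t, v⟩, htv, a, ha, rfl⟩
    obtain ⟨ht, -, hv⟩ := mem_stepPairs.1 htv
    exact ((snoc_mem_centerFiber_iff hz ht hv).2 ha).1

theorem pairwiseDisjoint_snocFiber :
    (stepPairs z p : Set (Σ _ : ℕ, ℕ)).PairwiseDisjoint (snocFiber n p z) := by
  rintro ⟨t, v⟩ - ⟨s, w⟩ hsw hne
  refine Set.disjoint_left.2 ?_
  rintro _ ⟨a, ha, rfl⟩ ⟨b, hb, hab⟩
  obtain ⟨rfl, hst⟩ := Fin.snoc_injective2 hab
  obtain rfl : s = t := by simpa using hst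
  have hs : s ≤ p := (mem_stepPairs.1 hsw).1
  have hvw := (ha.2 s (by omega)).symm.trans (hb.2 s (by omega))
  simp only [initSeq, lt_irrefl, if_false, if_true] at hvw
  exact hne (by rw [hvw])

theorem ncard_centerFiber (hz : Monotone z) (hzp : z p = n) :
    (centerFiber n p z).ncard = n ! := by
  induction n generalizing p z with
  | zero =>
    suffices centerFiber 0 p z = Set.univ by simp [this]
    refine Set.eq_univ_of_forall fun a => ⟨fun i => i.elim0, fun j hj => ?_⟩
    have := hz hj
    have := zlen_le (n := 0) (p := j) (a := a)
    omega
  | succ n ih =>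
    have hpiece : ∀ tv ∈ stepPairs z p, (snocFiber n p z tv).ncard = n ! := by
      intro ⟨t, v⟩ htv
      obtain ⟨ht, hprev, hv⟩ := mem_stepPairs.1 htv
      rw [snocFiber,
        Set.ncard_image_of_injective _ (Fin.snoc_left_injective (α := fun _ => ℕ) _)]
      refine ih (initSeq_monotone hz hprev hv) ?_
      simp only [initSeq, if_neg (show ¬ p + 1 < t by omega), if_neg (show p + 1 ≠ t by omega),
        Nat.add_sub_cancel, hzp]
    have hfinite (tv) (htv : tv ∈ stepPairs z p) : (snocFiber n p z tv).Finite :=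
      Set.finite_of_ncard_ne_zero ((hpiece tv htv).trans_ne n.factorial_ne_zero)
    rw [centerFiber_add_one hz hzp,
      (Finset.finite_toSet _).ncard_biUnion hfinite pairwiseDisjoint_snocFiber,
      finsum_mem_coe_finset, Finset.sum_congr rfl hpiece, Finset.sum_const, card_stepPairs hz, hzp,
      smul_eq_mul, Nat.factorial_succ]

end Counting

theorem stmt7_general (n p : ℕ) (z : Fin (p + 1) → ℕ)
    (hz : Monotone z) (hzp : z (Fin.last p) = n) :
    {a : Fin n → ℕ | (∀ i, 0 < a i) ∧ ∀ j : Fin (p + 1), zlen n (j : ℕ) a = z j}.ncard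
      = Nat.factorial n := by
  have hclamp : Monotone (Fin.clamp · p) := fun i j hij => by
    simp only [Fin.le_def, Fin.coe_clamp]
    omega
  have hclamp_last : Fin.clamp p p = Fin.last p := by ext; simp
  convert ncard_centerFiber (hz.comp hclamp) (hclamp_last ▸ hzp : z (Fin.clamp p p) = n) using 2
  ext a
  refine and_congr_right fun _ => Fin.forall_iff.trans (forall_congr' fun j => ?_)
  simp only [Nat.lt_succ_iff, Function.comp_apply]
  refine forall_congr' fun hj => ?_
  rw [show Fin.clamp j p = ⟨j, by omega⟩ by ext; simpa using hj]

theorem stmt7 (n p : ℕ) (hpn : n ≤ p) (z : Fin (p + 1) → ℕ)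
    (hz : Monotone z) (hzp : z (Fin.last p) = n) :
    {a : Fin n → ℕ | (∀ i, 0 < a i) ∧ ∀ j : Fin (p + 1), zlen n (j : ℕ) a = z j}.ncard
      = Nat.factorial n :=
  stmt7_general n p z hz hzp
end

section
/- The number of weakly increasing tuples (a_1, …, a_n) of positive integers satisfying a_i ≤ 1 + k(i−1) for every i ∈ [n] equals the Fuss–Catalan number F(n,k) = (1/(kn+1))·C(kn+n, kn). -/
def tc (k : ℕ) : ℕ → ℕ → ℕ
  | 0, _ => 1
  | n+1, 0 => tc k n k
  | n+1, m+1 => tc k (n+1) m + tc k n (m+k+1)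
termination_by n m => (n, m)

lemma choose_step (k n : ℕ) :
    Nat.choose (k*n+n+k+1) (n+1) = (k+1) * Nat.choose (k*n+n+k) n := by
  have h := Nat.add_one_mul_choose_eq (k*n+n+k) n
  apply Nat.eq_of_mul_eq_mul_right (Nat.succ_pos n)
  calc Nat.choose (k*n+n+k+1) (n+1) * (n+1) = (k*n+n+k+1) * Nat.choose (k*n+n+k) n := h.symm
    _ = (k+1) * Nat.choose (k*n+n+k) n * (n+1) := by ring

lemma choose_absorb (k n m : ℕ) :
    Nat.choose (k*(n+1)+(n+1)+m) (n+1) * (n+1)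
      = Nat.choose (k*(n+1)+(n+1)+m) n * (k*(n+1)+m+1) := by
  have h := Nat.choose_succ_right_eq (k*(n+1)+(n+1)+m) n
  rw [h]
  congr 1
  omega

theorem tc_q (k : ℕ) : ∀ n m : ℕ,
    ((k*n + m + 1 : ℕ) : ℚ) * tc k n m = ((m+1 : ℕ)) * (Nat.choose (k*n+n+m) n : ℚ)
  | 0, m => by simp [tc]
  | n+1, 0 => by
      have ih := tc_q k n k
      have e1 : k*(n+1) + 0 + 1 = k*n+k+1 := by ring
      have e2 : k*(n+1)+(n+1)+0 = k*n+n+k+1 := by ring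
      rw [show tc k (n+1) 0 = tc k n k from by simp [tc], e1, e2, choose_step]
      push_cast at ih ⊢
      linear_combination ih
  | n+1, m+1 => by
      have ih1 := tc_q k (n+1) m
      have ih2 := tc_q k n (m+k+1)
      have e2 : k*n+n+(m+k+1) = k*(n+1)+(n+1)+m := by ring
      rw [e2] at ih2
      have e3 : k*(n+1)+(n+1)+(m+1) = k*(n+1)+(n+1)+m + 1 := by ring
      rw [show tc k (n+1) (m+1) = tc k (n+1) m + tc k n (m+k+1) from by simp [tc], e3,
        Nat.choose_succ_succ']
      have habs : ((Nat.choose (k*(n+1)+(n+1)+m) (n+1) : ℚ)) * ((n:ℚ)+1)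
          = (Nat.choose (k*(n+1)+(n+1)+m) n : ℚ) * ((k:ℚ)*((n:ℚ)+1)+(m:ℚ)+1) := by
        exact_mod_cast choose_absorb k n m
      apply mul_left_cancel₀ (show ((k*(n+1)+m+1 : ℕ) : ℚ) ≠ 0 by positivity)
      push_cast at ih1 ih2 ⊢
      linear_combination ((k:ℚ)*((n:ℚ)+1)+(m:ℚ)+2) * ih1 + ((k:ℚ)*((n:ℚ)+1)+(m:ℚ)+1) * ih2 - (k:ℚ) * habs
termination_by n m => (n, m)

def Sset (k n m : ℕ) : Set (Fin n → ℕ) :=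
  {a | (∀ i, 0 < a i) ∧ Monotone a ∧ ∀ i : Fin n, a i ≤ 1 + k * (i : ℕ) + m}

lemma Sset_finite (k n m : ℕ) : (Sset k n m).Finite := by
  apply Set.Finite.subset (Set.finite_Iic (fun i : Fin n => 1 + k * (i : ℕ) + m))
  intro a ha
  exact fun i => ha.2.2 i

lemma monotone_cons_iff {n : ℕ} (c : Fin n → ℕ) :
    Monotone (Fin.cons 1 c : Fin (n+1) → ℕ) ↔ Monotone c ∧ ∀ i, 1 ≤ c i := by
  constructor
  · intro h
    refine ⟨fun i j hij => ?_, fun i => ?_⟩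
    · have := h (a := i.succ) (b := j.succ) (by simpa using hij)
      simpa using this
    · have := h (a := 0) (b := i.succ) (by simp [Fin.le_def])
      simpa using this
  · rintro ⟨hc, h1⟩ i j hij
    induction i using Fin.cases with
    | zero =>
      induction j using Fin.cases with
      | zero => simp
      | succ j => simpa using h1 j
    | succ i =>
      induction j using Fin.cases with
      | zero => simp [Fin.le_def] at hij
      | succ j =>
        simp only [Fin.cons_succ]
        exact hc (by simpa using hij)

lemma cons_image (k n m : ℕ) :
    (fun c : Fin n → ℕ => (Fin.cons 1 c : Fin (n+1) → ℕ)) '' Sset k n (m+k)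
      = {a ∈ Sset k (n+1) m | a 0 = 1} := by
  ext a
  constructor
  · rintro ⟨c, ⟨hpos, hmono, hbd⟩, rfl⟩
    refine ⟨⟨?_, ?_, ?_⟩, by simp⟩
    · intro i
      induction i using Fin.cases with
      | zero => simp
      | succ i => simpa using hpos i
    · exact (monotone_cons_iff c).2 ⟨hmono, fun i => hpos i⟩
    · intro i
      induction i using Fin.cases with
      | zero => simp
      | succ i =>
        have := hbd i
        simp only [Fin.cons_succ, Fin.val_succ, Nat.mul_add, Nat.mul_one]
        omega
  · rintro ⟨⟨hpos, hmono, hbd⟩, h0⟩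
    refine ⟨Fin.tail a, ⟨?_, ?_, ?_⟩, ?_⟩
    · intro i; exact hpos i.succ
    · intro i j hij
      exact hmono (by simpa using hij)
    · intro i
      have := hbd i.succ
      simp only [Fin.tail, Fin.val_succ, Nat.mul_add, Nat.mul_one] at *
      omega
    · conv_rhs => rw [← Fin.cons_self_tail a]
      simp [h0]

lemma succ_image (k n m : ℕ) :
    (fun (a : Fin (n+1) → ℕ) i => a i + 1) '' Sset k (n+1) m
      = {a ∈ Sset k (n+1) (m+1) | a 0 ≠ 1} := by
  ext b
  constructor
  · rintro ⟨a, ⟨hpos, hmono, hbd⟩, rfl⟩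
    refine ⟨⟨?_, ?_, ?_⟩, ?_⟩
    · intro i; simp
    · intro i j hij
      simp only [add_le_add_iff_right]
      exact hmono hij
    · intro i
      have := hbd i
      simp only
      omega
    · have := hpos 0
      simp only
      omega
  · rintro ⟨⟨hpos, hmono, hbd⟩, h0⟩
    have h2 : 2 ≤ b 0 := by have := hpos 0; omega
    have hall : ∀ i, 2 ≤ b i := fun i => le_trans h2 (hmono (Fin.zero_le i))
    refine ⟨fun i => b i - 1, ⟨?_, ?_, ?_⟩, ?_⟩
    · intro i
      show 0 < b i - 1
      have := hall i; omega
    · intro i j hij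
      show b i - 1 ≤ b j - 1
      have := hmono hij; omega
    · intro i
      show b i - 1 ≤ 1 + k * (i : ℕ) + m
      have := hbd i; omega
    · funext i
      show b i - 1 + 1 = b i
      have := hall i; omega

lemma tc_spec (k n : ℕ) : (k * n + 1) * tc k n 0 = Nat.choose (k*n+n) n := by
  have h := tc_q k n 0
  rw [show k*n+0+1 = k*n+1 from by ring, show k*n+n+0 = k*n+n from rfl] at h
  have h2 : (k*n+1) * tc k n 0 = (0+1) * Nat.choose (k*n+n) n := by exact_mod_cast h
  simpa using h2

lemma card_zero (k m : ℕ) : (Sset k 0 m).ncard = 1 := by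
  have huniv : Sset k 0 m = Set.univ := by
    ext a
    simp only [Set.mem_univ, iff_true, Sset, Set.mem_setOf_eq]
    exact ⟨fun i => i.elim0, fun i => i.elim0, fun i => i.elim0⟩
  rw [huniv, Set.ncard_univ]
  simp

lemma card_succ_zero (k n : ℕ) : (Sset k (n+1) 0).ncard = (Sset k n k).ncard := by
  have himg := cons_image k n 0
  rw [show 0 + k = k from by omega] at himg
  have hall : {a ∈ Sset k (n+1) 0 | a 0 = 1} = Sset k (n+1) 0 := by
    ext a
    simp only [Set.mem_setOf_eq, and_iff_left_iff_imp]
    intro ha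
    have h1 := ha.1 0
    have h2 := ha.2.2 0
    simp at h2
    omega
  rw [← hall, ← himg]
  exact Set.ncard_image_of_injective _ (Fin.cons_right_injective (α := fun _ : Fin (n+1) => ℕ) 1)

lemma succ_injective (n : ℕ) :
    Function.Injective (fun (a : Fin (n+1) → ℕ) i => a i + 1) := by
  intro a b h
  funext i
  have := congrFun h i
  simpa using this

lemma card_split (k n m : ℕ) :
    (Sset k (n+1) (m+1)).ncard = (Sset k (n+1) m).ncard + (Sset k n (m+k+1)).ncard := by
  have himgA := cons_image k n (m+1)
  rw [show m + 1 + k = m+k+1 from by omega] at himgA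
  have himgB := succ_image k n m
  have hsplit : Sset k (n+1) (m+1)
      = {a ∈ Sset k (n+1) (m+1) | a 0 = 1} ∪ {a ∈ Sset k (n+1) (m+1) | a 0 ≠ 1} := by
    ext a
    by_cases h : a 0 = 1 <;> simp [h]
  have hdisj : Disjoint {a ∈ Sset k (n+1) (m+1) | a 0 = 1}
      {a ∈ Sset k (n+1) (m+1) | a 0 ≠ 1} := by
    rw [Set.disjoint_left]
    rintro a ⟨_, h1⟩ ⟨_, h2⟩
    exact h2 h1
  have hfA : {a ∈ Sset k (n+1) (m+1) | a 0 = 1}.Finite :=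
    (Sset_finite k (n+1) (m+1)).subset (fun a ha => ha.1)
  have hfB : {a ∈ Sset k (n+1) (m+1) | a 0 ≠ 1}.Finite :=
    (Sset_finite k (n+1) (m+1)).subset (fun a ha => ha.1)
  rw [hsplit, Set.ncard_union_eq hdisj hfA hfB, ← himgA, ← himgB]
  have e1 : ((fun c : Fin n → ℕ => (Fin.cons 1 c : Fin (n+1) → ℕ)) '' Sset k n (m+k+1)).ncard
      = (Sset k n (m+k+1)).ncard :=
    Set.ncard_image_of_injective _ (Fin.cons_right_injective (α := fun _ : Fin (n+1) => ℕ) 1)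
  have e2 : ((fun (a : Fin (n+1) → ℕ) i => a i + 1) '' Sset k (n+1) m).ncard
      = (Sset k (n+1) m).ncard :=
    by exact Set.ncard_image_of_injective _ (succ_injective n)
  rw [e1, e2]
  exact Nat.add_comm _ _

theorem card_S (k : ℕ) : ∀ n m : ℕ, (Sset k n m).ncard = tc k n m
  | 0, m => by rw [card_zero]; simp [tc]
  | n+1, 0 => by
      rw [card_succ_zero, card_S k n k]
      simp [tc]
  | n+1, m+1 => by
      rw [card_split, card_S k (n+1) m, card_S k n (m+k+1)]
      simp [tc]
termination_by n m => (n, m)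

theorem stmt8 (n k : ℕ) (hn : 0 < n) (hk : 0 < k) :
    {a : Fin n → ℕ | (∀ i, 0 < a i) ∧ Monotone a ∧
        ∀ i : Fin n, a i ≤ 1 + k * (i : ℕ)}.ncard * (k * n + 1)
      = Nat.choose (k * n + n) (k * n) := by
  have hset : {a : Fin n → ℕ | (∀ i, 0 < a i) ∧ Monotone a ∧
      ∀ i : Fin n, a i ≤ 1 + k * (i : ℕ)} = Sset k n 0 := by
    ext a
    simp [Sset]
  rw [hset, card_S k n 0, Nat.mul_comm, tc_spec k n]
  rw [← Nat.choose_symm (show k*n ≤ k*n + n by omega)]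
  congr 1
  omega
end

section
/- Let π ∈ S_n and let a = (a_1,…,a_n) ∈ ℕⁿ be weakly increasing. Define b = I(π) + a ∘ π⁻¹ (componentwise sum). Then for all i ∈ [n−1]: b_i ≤ b_{i+1} if and only if π⁻¹(i) < π⁻¹(i+1). -/
/-- Inversion table: `I(π)_i = |{j < π⁻¹(i) : π(j) > i}|`. -/
def invTable {n : ℕ} (π : Equiv.Perm (Fin n)) (i : Fin n) : ℕ :=
  (Finset.univ.filter (fun j => j < π.symm i ∧ i < π j)).card

theorem stmt15 {n : ℕ} (π : Equiv.Perm (Fin n)) (a : Fin n → ℕ) (ha : ∀ i, 0 < a i)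
    (hmono : Monotone a) (i : Fin n) (h : (i : ℕ) + 1 < n) :
    let i' : Fin n := ⟨(i : ℕ) + 1, h⟩
    let b : Fin n → ℕ := fun j => invTable π j + a (π.symm j)
    (b i ≤ b i' ↔ π.symm i < π.symm i') := by
  intro i' b
  set p := π.symm i with hp
  set q := π.symm i' with hq
  have hπp : π p = i := by simp [hp]
  have hπq : π q = i' := by simp [hq]
  have hii' : i < i' := by simp [i', Fin.lt_def]
  have hpq : p ≠ q := by
    intro hpq
    have h2 := congrArg π hpq
    rw [hπp, hπq] at h2
    exact absurd h2 (ne_of_lt hii')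
  rcases lt_or_gt_of_ne hpq with hlt | hgt
  · constructor
    · intro _; exact hlt
    · intro _
      have hsub : (Finset.univ.filter (fun j => j < p ∧ i < π j)) ⊆
          (Finset.univ.filter (fun j => j < q ∧ i' < π j)) := by
        intro j hj
        simp only [Finset.mem_filter, Finset.mem_univ, true_and] at hj ⊢
        obtain ⟨hj1, hj2⟩ := hj
        refine ⟨lt_trans hj1 hlt, ?_⟩
        have hne : π j ≠ i' := by
          intro hne
          have hjq : j = q := by
            have := congrArg π.symm hne
            simpa [hq] using this
          rw [hjq] at hj1
          exact absurd hj1 (not_lt_of_gt hlt)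
        have hne' : (π j : ℕ) ≠ (i : ℕ) + 1 := by
          intro he
          exact hne (Fin.ext (by simp [i', he]))
        have hlt2 : (i : ℕ) < (π j : ℕ) := hj2
        show ((i : ℕ) + 1 : ℕ) < (π j : ℕ)
        omega
      have hI : invTable π i ≤ invTable π i' := Finset.card_le_card hsub
      have haa : a p ≤ a q := hmono (le_of_lt hlt)
      show invTable π i + a p ≤ invTable π i' + a q
      exact Nat.add_le_add hI haa
  · constructor
    · intro hb
      exfalso
      have hqn : q ∉ (Finset.univ.filter (fun j => j < q ∧ i' < π j)) := by
        simp
      have hsub : insert q (Finset.univ.filter (fun j => j < q ∧ i' < π j)) ⊆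
          (Finset.univ.filter (fun j => j < p ∧ i < π j)) := by
        intro j hj
        simp only [Finset.mem_insert, Finset.mem_filter, Finset.mem_univ, true_and] at hj ⊢
        rcases hj with rfl | ⟨hj1, hj2⟩
        · exact ⟨hgt, by rw [hπq]; exact hii'⟩
        · exact ⟨lt_trans hj1 hgt, lt_trans hii' hj2⟩
      have hcard := Finset.card_le_card hsub
      rw [Finset.card_insert_of_notMem hqn] at hcard
      have hI : invTable π i' + 1 ≤ invTable π i := hcard
      have haa : a q ≤ a p := hmono (le_of_lt hgt)
      have hbb : invTable π i + a p ≤ invTable π i' + a q := hb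
      omega
    · intro hlt'
      exact absurd hlt' (not_lt_of_gt hgt)
end

section
/- Let a ∈ ℕⁿ be weakly increasing, π ∈ S_n, and b = I(π) + a ∘ π⁻¹. Then for every p ≥ 0 and every i ∈ [n], i ∈ Z_p(a) if and only if π(i) ∈ Z_p(b); in particular z_p(a) = z_p(b) for all p. -/
/-- The `p`-center `Z_p(a)`: the largest subset `{x_1 > ⋯ > x_q}` of `[n]` with
`a_{x_j} ≤ p + j` for all `j`, obtained greedily from the largest index down. -/
def Zset (n p : ℕ) (a : Fin n → ℕ) : Finset (Fin n) :=
  (List.finRange n).reverse.foldl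
    (fun s i => if a i ≤ p + s.card + 1 then insert i s else s) ∅

/-!
The greedy construction of `Z_p(c)` is characterised by self-consistency: a set `S` equals
`Z_p(c)` as soon as `c i ≤ p + #{j ∈ S | i < j} + 1 ↔ i ∈ S` for every `i`. For weakly increasing
`a` this holds for `S = {i | a i ≤ p + 1}`. For `b` at position `π i`, the inversion count
`I(π)_{π i}` counts the `k < i` with `π k > π i`; by monotonicity these are all selected when
`a i ≤ p + 1`, and they include all selected `k` with `π k > π i` otherwise, so the condition
holds for `b` and `S.map π`.
-/

open Finset

theorem List.foldr_greedy_eq_filter {α : Type*} [LinearOrder α] (c : α → ℕ) (p : ℕ)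
    (S : Finset α) {l : List α} (hl : l.Pairwise (· < ·))
    (hS : ∀ i ∈ l, c i ≤ p + #{j ∈ S | j ∈ l ∧ i < j} + 1 ↔ i ∈ S) :
    l.foldr (fun i s => if c i ≤ p + #s + 1 then insert i s else s) ∅ = {j ∈ S | j ∈ l} := by
  induction l with
  | nil => simp
  | cons i xs ih =>
    obtain ⟨hi_lt, hxs⟩ := List.pairwise_cons.mp hl
    have htail : ∀ i' ∈ xs, {j ∈ S | j ∈ i :: xs ∧ i' < j} = {j ∈ S | j ∈ xs ∧ i' < j} :=
      fun i' hi' => Finset.filter_congr fun j _ => by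
        rw [List.mem_cons]
        constructor
        · rintro ⟨rfl | hj, hij⟩
          · exact absurd ((hi_lt i' hi').trans hij) (lt_irrefl _)
          · exact ⟨hj, hij⟩
        · exact fun h => ⟨Or.inr h.1, h.2⟩
    have hhead : {j ∈ S | j ∈ xs} = {j ∈ S | j ∈ i :: xs ∧ i < j} :=
      Finset.filter_congr fun j _ => by
        rw [List.mem_cons]
        constructor
        · exact fun hj => ⟨Or.inr hj, hi_lt j hj⟩
        · rintro ⟨rfl | hj, hij⟩
          · exact absurd hij (lt_irrefl _)
          · exact hj
    have hcond := hS i List.mem_cons_self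
    rw [← hhead] at hcond
    rw [List.foldr_cons, ih hxs fun i' hi' => htail i' hi' ▸ hS i' (.tail _ hi')]
    split_ifs with hci
    · ext j; by_cases hj : j = i <;> simp [hj, hcond.mp hci]
    · ext j; by_cases hj : j = i <;> simp [hj, mt hcond.mpr hci]

theorem Zset_eq_of_forall_le_iff_mem {n p : ℕ} {c : Fin n → ℕ} (S : Finset (Fin n))
    (hS : ∀ i, c i ≤ p + #{j ∈ S | i < j} + 1 ↔ i ∈ S) : Zset n p c = S := by
  rw [Zset, List.foldl_reverse,
    List.foldr_greedy_eq_filter c p S (List.pairwise_lt_finRange n) fun i _ => by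
      simpa only [List.mem_finRange, true_and] using hS i]
  simp only [List.mem_finRange, filter_true]

theorem Zset_eq_filter_of_monotone {n p : ℕ} {a : Fin n → ℕ} (hmono : Monotone a) :
    Zset n p a = ({i | a i ≤ p + 1} : Finset (Fin n)) := by
  refine Zset_eq_of_forall_le_iff_mem _ fun i => ?_
  simp only [filter_filter, mem_filter, mem_univ, true_and]
  refine ⟨fun h => ?_, fun h => by omega⟩
  obtain hempty | ⟨j, hj⟩ := Finset.eq_empty_or_nonempty {j | a j ≤ p + 1 ∧ i < j}
  · simpa [hempty] using h
  · simp only [mem_filter, mem_univ, true_and] at hj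
    exact (hmono hj.2.le).trans hj.1

theorem Zset_invTable_add_comp_symm {n : ℕ} (π : Equiv.Perm (Fin n)) {a : Fin n → ℕ}
    (hmono : Monotone a) (p : ℕ) :
    Zset n p (fun j => invTable π j + a (π.symm j)) = (Zset n p a).map π.toEmbedding := by
  rw [Zset_eq_filter_of_monotone hmono]
  refine Zset_eq_of_forall_le_iff_mem _ fun j => ?_
  obtain ⟨i, rfl⟩ := π.surjective j
  have hinv : invTable π (π i) = #{k | k < i ∧ π i < π k} := by simp [invTable]
  rw [filter_map, card_map, mem_map_equiv, hinv]
  simp only [Function.comp_apply, Equiv.toEmbedding_apply, Equiv.symm_apply_apply, filter_filter,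
    mem_filter, mem_univ, true_and]
  constructor
  · intro h
    by_contra! hlarge
    have : #{k | a k ≤ p + 1 ∧ π i < π k} ≤ #{k | k < i ∧ π i < π k} :=
      card_le_card fun k => by
        simpa only [mem_filter, mem_univ, true_and] using
          fun hk => ⟨hmono.reflect_lt (hk.1.trans_lt hlarge), hk.2⟩
    omega
  · intro h
    have : #{k | k < i ∧ π i < π k} ≤ #{k | a k ≤ p + 1 ∧ π i < π k} :=
      card_le_card fun k => by
        simpa only [mem_filter, mem_univ, true_and] using
          fun hk => ⟨(hmono hk.1.le).trans h, hk.2⟩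
    omega

theorem stmt16_general {n : ℕ} (π : Equiv.Perm (Fin n)) (a : Fin n → ℕ)
    (hmono : Monotone a) (p : ℕ) :
    let b : Fin n → ℕ := fun j => invTable π j + a (π.symm j)
    (∀ i : Fin n, i ∈ Zset n p a ↔ π i ∈ Zset n p b) ∧
    (Zset n p a).card = (Zset n p b).card := by
  intro b
  have hZb : Zset n p b = (Zset n p a).map π.toEmbedding := Zset_invTable_add_comp_symm π hmono p
  rw [hZb, card_map]
  exact ⟨fun i => by simp, rfl⟩

theorem stmt16 {n : ℕ} (π : Equiv.Perm (Fin n)) (a : Fin n → ℕ) (ha : ∀ i, 0 < a i)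
    (hmono : Monotone a) (p : ℕ) :
    let b : Fin n → ℕ := fun j => invTable π j + a (π.symm j)
    (∀ i : Fin n, i ∈ Zset n p a ↔ π i ∈ Zset n p b) ∧
    (Zset n p a).card = (Zset n p b).card :=
  stmt16_general π a hmono p
end

section
/- Let a ∈ ℕⁿ be weakly increasing, π ∈ S_n, and b = I(π) + a ∘ π⁻¹. Define p(b)_i = j if i ∈ Z_j(b) \ Z_{j−1}(b). Then b − p(b) = 1 + I(π), i.e. b_i − p(b)_i = 1 + I(π)_i for every i ∈ [n]. -/
/-!
For `b = I(π) + a ∘ π⁻¹` the center `Z_p(b)` is the set `{j | a (π⁻¹ j) ≤ p + 1}`. Indeed this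
set reproduces itself under the greedy construction: comparing through `π`, monotonicity of `a`
shows that it has at least `I(π)_i` elements above `i` when `i` belongs to it and at most `I(π)_i`
otherwise. Hence `p(b)_i = a (π⁻¹ i) - 1`, and `b_i - p(b)_i = I(π)_i + 1` because `a > 0`.
-/

open Finset

section Greedy

variable {n p : ℕ} {b : Fin n → ℕ} {S : Finset (Fin n)}

theorem foldl_greedy_eq_of_forall_mem_iff
    (hS : ∀ i, i ∈ S ↔ b i ≤ p + #{j ∈ S | i < j} + 1) :
    ∀ (l : List (Fin n)) (t : ℕ), l.Pairwise (· > ·) → (∀ y : Fin n, y ∈ l ↔ y.val < t) →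
      l.foldl (fun s i => if b i ≤ p + s.card + 1 then insert i s else s)
        {j ∈ S | t ≤ j.val} = S
  | [], t, _, hl => by
    ext j
    simpa using fun _ => not_lt.mp ((hl j).not.mp List.not_mem_nil)
  | x :: l, t, hxl, hl => by
    rw [List.pairwise_cons] at hxl
    have hxt : x.val < t := (hl x).mp List.mem_cons_self
    have hl' : ∀ y : Fin n, y ∈ l ↔ y.val < x.val := fun y =>
      ⟨hxl.1 y, fun hy =>
        (List.mem_cons.mp ((hl y).mpr (hy.trans hxt))).resolve_left (Fin.ne_of_lt hy)⟩
    have hupper : {j ∈ S | t ≤ j.val} = {j ∈ S | x < j} := by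
      refine filter_congr fun j _ => ⟨fun hj => ?_, fun hj => ?_⟩
      · exact Fin.lt_def.mpr (hxt.trans_le hj)
      · by_contra! h
        rcases List.mem_cons.mp ((hl j).mpr h) with rfl | hj'
        · exact lt_irrefl _ hj
        · exact lt_asymm hj ((hl' j).mp hj')
    have hstep : (if b x ≤ p + #{j ∈ S | x < j} + 1 then insert x {j ∈ S | x < j}
        else {j ∈ S | x < j}) = {j ∈ S | x.val ≤ j.val} := by
      have hsplit : ∀ j, x.val ≤ j.val ↔ j = x ∨ x < j := fun j => by
        rw [Fin.ext_iff, Fin.lt_def]; omega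
      by_cases hxS : x ∈ S
      · rw [if_pos ((hS x).mp hxS)]
        ext j
        simp only [mem_insert, mem_filter, hsplit]
        aesop
      · rw [if_neg ((hS x).not.mp hxS)]
        ext j
        simp only [mem_filter, hsplit]
        exact and_congr_right fun hj => (or_iff_right (by rintro rfl; exact hxS hj)).symm
    rw [List.foldl_cons, hupper, hstep]
    exact foldl_greedy_eq_of_forall_mem_iff hS l x.val hxl.2 hl'

theorem Zset_eq_of_forall_mem_iff
    (hS : ∀ i, i ∈ S ↔ b i ≤ p + #{j ∈ S | i < j} + 1) : Zset n p b = S := by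
  have hempty : {j ∈ S | n ≤ j.val} = ∅ := filter_false_of_mem fun j _ => not_le.mpr j.isLt
  rw [Zset, ← hempty]
  exact foldl_greedy_eq_of_forall_mem_iff hS _ n
    (List.pairwise_reverse.mpr (List.pairwise_lt_finRange n)) (by simp)

end Greedy

section Inversions

variable {n : ℕ} (π : Equiv.Perm (Fin n)) {a : Fin n → ℕ}

theorem invTable_le_card_of_le (hmono : Monotone a) {c : ℕ} {i : Fin n}
    (hi : a (π.symm i) ≤ c) : invTable π i ≤ #{j | a (π.symm j) ≤ c ∧ i < j} := by
  refine card_le_card_of_injOn π (fun j hj => ?_) π.injective.injOn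
  simp only [coe_filter, mem_univ, true_and, Set.mem_ofPred_eq] at hj ⊢
  exact ⟨by simpa using (hmono hj.1.le).trans hi, hj.2⟩

theorem card_le_invTable_of_lt (hmono : Monotone a) {c : ℕ} {i : Fin n}
    (hi : c < a (π.symm i)) : #{j | a (π.symm j) ≤ c ∧ i < j} ≤ invTable π i := by
  refine card_le_card_of_injOn π.symm (fun k hk => ?_) π.symm.injective.injOn
  simp only [coe_filter, mem_univ, true_and, Set.mem_ofPred_eq] at hk ⊢
  exact ⟨lt_of_not_ge fun h => (hmono h).not_gt (hk.1.trans_lt hi), by simpa using hk.2⟩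

theorem mem_Zset_invTable_add_iff (hmono : Monotone a) (p : ℕ) (i : Fin n) :
    i ∈ Zset n p (fun j => invTable π j + a (π.symm j)) ↔ a (π.symm i) ≤ p + 1 := by
  rw [Zset_eq_of_forall_mem_iff (S := {k | a (π.symm k) ≤ p + 1}) fun k => ?_]
  · simp
  simp only [mem_filter, mem_univ, true_and, filter_filter]
  by_cases hk : a (π.symm k) ≤ p + 1
  · have := invTable_le_card_of_le π hmono hk
    omega
  · have := card_le_invTable_of_lt π hmono (not_le.mp hk)
    omega

end Inversions

theorem stmt17 {n : ℕ} (π : Equiv.Perm (Fin n)) (a : Fin n → ℕ) (ha : ∀ i, 0 < a i)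
    (hmono : Monotone a) (i : Fin n) :
    let b : Fin n → ℕ := fun j => invTable π j + a (π.symm j)
    b i - sInf {j : ℕ | i ∈ Zset n j b} = 1 + invTable π i := by
  intro b
  have hpos := ha (π.symm i)
  have hZ : {p : ℕ | i ∈ Zset n p b} = Set.Ici (a (π.symm i) - 1) := by
    ext p
    simp only [Set.mem_ofPred_eq, Set.mem_Ici, b, mem_Zset_invTable_add_iff π hmono]
    omega
  rw [hZ, csInf_Ici]
  simp only [b]
  omega
end

section
/- For every permutation π ∈ S_n and positive integers k, ℓ with vectors defined componentwise, Rev(1 + k(λ↓(π)∘π⁻¹) + (ℓ+1)(λ↑(π)∘π⁻¹)) = 1 + (ℓ+1)(λ↓(ρ)∘ρ⁻¹) + k(λ↑(ρ)∘ρ⁻¹), where ρ is the permutation whose one-line word of ρ⁻¹ is the reversal of that of π⁻¹. -/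
/-- `λ↑(a)_i = |{j < i : a_j > a_i}|`. -/
def lamUp {n : ℕ} (a : Fin n → ℕ) (i : Fin n) : ℕ :=
  (Finset.univ.filter (fun j => j < i ∧ a i < a j)).card

/-- `λ↓(a)_i = |{j < i : a_j < a_i}|`. -/
def lamDown {n : ℕ} (a : Fin n → ℕ) (i : Fin n) : ℕ :=
  (Finset.univ.filter (fun j => j < i ∧ a j < a i)).card

theorem stmt19 {n : ℕ} (k l : ℕ) (hk : 0 < k) (hl : 0 < l)
    (π ρ : Equiv.Perm (Fin n)) (hρ : ∀ i : Fin n, ρ.symm i = π.symm i.rev) :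
    ∀ i : Fin n,
      1 + k * lamDown (fun j => (π j : ℕ)) (π.symm i.rev)
        + (l + 1) * lamUp (fun j => (π j : ℕ)) (π.symm i.rev)
      = 1 + (l + 1) * lamDown (fun j => (ρ j : ℕ)) (ρ.symm i)
          + k * lamUp (fun j => (ρ j : ℕ)) (ρ.symm i) := by
  have hρ' : ∀ j, ρ j = (π j).rev := by
    intro j
    have h := hρ ((π j).rev)
    rw [Fin.rev_rev, Equiv.symm_apply_apply] at h
    have := congrArg ρ h
    rw [Equiv.apply_symm_apply] at this
    exact this.symm
  intro i
  rw [hρ i]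
  set p := π.symm i.rev
  have hd : lamDown (fun j => ((ρ j) : ℕ)) p = lamUp (fun j => ((π j) : ℕ)) p := by
    unfold lamDown lamUp
    congr 1
    ext j
    simp only [Finset.mem_filter, and_congr_right_iff]
    intro _ _
    simp only [hρ']
    exact ⟨fun h => Fin.rev_lt_rev.mp h, fun h => Fin.rev_lt_rev.mpr h⟩
  have hu : lamUp (fun j => ((ρ j) : ℕ)) p = lamDown (fun j => ((π j) : ℕ)) p := by
    unfold lamDown lamUp
    congr 1
    ext j
    simp only [Finset.mem_filter, and_congr_right_iff]
    intro _ _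
    simp only [hρ']
    exact ⟨fun h => Fin.rev_lt_rev.mp h, fun h => Fin.rev_lt_rev.mpr h⟩
  rw [hd, hu]
  ring
end
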